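/- arXiv:1411.7661 — 2 statements merged into one kernel-verified Lean document; each statement's English description precedes it below -/
import Mathlib

section
/- Let Γ be a group with a subgroup Δ of index 2, fix an element γ₀ ∈ Γ ∖ Δ, let A be a commutative ring and let d ≥ 1. Then there is a bijection between (i) the set of group homomorphisms r : Γ → 𝒢_d(A) such that r⁻¹(𝒢_d⁰(A)) = Δ, and (ii) the set of triples (ρ, μ, P), where ρ : Δ → GL_d(A) and μ : Γ → Aˣ are group homomorphisms and P ∈ GL_d(A) is a matrix satisfying ρ(δ)ᵀ · P⁻¹ · ρ(γ₀δγ₀⁻¹) = μ(δ) · P⁻¹ for all δ ∈ Δ, and P⁻¹ · ρ(γ₀²) = −μ(γ₀) · (Pᵀ)⁻¹. Under this bijection, ρ is the GL_d-component of r restricted to Δ, μ = ν ∘ r, and r(γ₀) = (P, −μ(γ₀))·ȷ. -/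
open Matrix

namespace PaperCHT

variable (d : ℕ) (A : Type*) [CommRing A]

/-- `GL_d(A)`, realized as the unit group of the matrix ring. -/
abbrev GLd : Type _ := (Matrix (Fin d) (Fin d) A)ˣ

/-- The transpose-inverse automorphism `g ↦ (gᵀ)⁻¹` of `GL_d(A)`. -/
def tinv : GLd d A →* GLd d A where
  toFun g :=
    ⟨((g⁻¹).val)ᵀ, (g.val)ᵀ,
      by rw [← Matrix.transpose_mul, Units.mul_inv, Matrix.transpose_one],
      by rw [← Matrix.transpose_mul, Units.inv_mul, Matrix.transpose_one]⟩
  map_one' := Units.ext (by simp)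
  map_mul' g h := Units.ext (by simp [_root_.mul_inv_rev, Matrix.transpose_mul])

@[simp] lemma tinv_val (g : GLd d A) : (tinv d A g).val = ((g⁻¹).val)ᵀ := rfl

/-- Scalar matrices, as a homomorphism `Aˣ → GL_d(A)`. -/
def scalarU : Aˣ →* GLd d A :=
  Units.map ((Matrix.scalar (Fin d)).toMonoidHom)

@[simp] lemma scalarU_val (a : Aˣ) : (scalarU d A a).val = Matrix.scalar (Fin d) (a : A) := rfl

lemma scalarU_commute (a : Aˣ) (u : GLd d A) : Commute (scalarU d A a) u := by
  apply Units.ext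
  rw [Units.val_mul, Units.val_mul, scalarU_val]
  exact (Matrix.scalar_commute (a : A) (fun r => mul_comm _ _) u.val).eq

lemma tinv_scalarU (a : Aˣ) : tinv d A (scalarU d A a) = scalarU d A a⁻¹ := by
  apply Units.ext
  rw [tinv_val, ← map_inv]
  simp [Matrix.scalar_apply, Matrix.transpose_nonsing_inv]

lemma tinv_tinv (g : GLd d A) : tinv d A (tinv d A g) = g := by
  apply Units.ext
  rw [tinv_val, ← map_inv, tinv_val, inv_inv, transpose_transpose]


/-- The order-two automorphism `(g, a) ↦ (a·(gᵀ)⁻¹, a)` of `GL_d(A) × Aˣ` given by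
conjugation by `ȷ`. -/
def iotaHom : (GLd d A × Aˣ) →* (GLd d A × Aˣ) where
  toFun x := (scalarU d A x.2 * tinv d A x.1, x.2)
  map_one' := by
    refine Prod.ext ?_ rfl
    show scalarU d A 1 * tinv d A 1 = 1
    simp
  map_mul' x y := by
    refine Prod.ext ?_ rfl
    show scalarU d A (x.2 * y.2) * tinv d A (x.1 * y.1)
        = scalarU d A x.2 * tinv d A x.1 * (scalarU d A y.2 * tinv d A y.1)
    rw [_root_.map_mul, _root_.map_mul]
    exact (scalarU_commute d A y.2 (tinv d A x.1)).mul_mul_mul_comm _ _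

lemma iotaHom_invol (x : GLd d A × Aˣ) : iotaHom d A (iotaHom d A x) = x := by
  obtain ⟨g, a⟩ := x
  refine Prod.ext ?_ rfl
  show scalarU d A a * tinv d A (scalarU d A a * tinv d A g) = g
  rw [_root_.map_mul, tinv_scalarU, tinv_tinv, ← mul_assoc, ← _root_.map_mul,
    mul_inv_cancel, _root_.map_one, one_mul]

/-- The automorphism `iotaHom` as an element of `MulAut (GL_d(A) × Aˣ)`. -/
def iota : MulAut (GLd d A × Aˣ) :=
  { toFun := iotaHom d A
    invFun := iotaHom d A
    left_inv := iotaHom_invol d A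
    right_inv := iotaHom_invol d A
    map_mul' := map_mul (iotaHom d A) }

lemma iota_sq : iota d A ^ 2 = 1 := by
  refine MulEquiv.ext fun x => ?_
  rw [pow_two, MulAut.mul_apply, MulAut.one_apply]
  exact iotaHom_invol d A x

/-- The action of `{1, ȷ} = ℤ/2` on `GL_d(A) × Aˣ` defining `𝒢_d(A)`. -/
def phi : Multiplicative (ZMod 2) →* MulAut (GLd d A × Aˣ) where
  toFun x := iota d A ^ (Multiplicative.toAdd x).val
  map_one' := by
    show iota d A ^ (Multiplicative.toAdd (1 : Multiplicative (ZMod 2))).val = 1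
    simp
  map_mul' x y := by
    show iota d A ^ _ = iota d A ^ _ * iota d A ^ _
    rw [toAdd_mul, ZMod.val_add, ← pow_eq_pow_mod _ (iota_sq d A), pow_add]

/-- The Clozel–Harris–Taylor group `𝒢_d(A) = (GL_d(A) × GL_1(A)) ⋊ {1, ȷ}`. -/
abbrev Gcal : Type _ := (GLd d A × Aˣ) ⋊[phi d A] Multiplicative (ZMod 2)

/-- The element `ȷ ∈ 𝒢_d(A)`. -/
def jj : Gcal d A := SemidirectProduct.inr (Multiplicative.ofAdd 1)

/-- The connected component `𝒢_d⁰(A) = GL_d(A) × GL_1(A)`, as a subgroup of `𝒢_d(A)`. -/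
def Gzero : Subgroup (Gcal d A) :=
  (SemidirectProduct.inl : (GLd d A × Aˣ) →* Gcal d A).range

lemma snd_iota_pow (m : ℕ) : ∀ n : GLd d A × Aˣ, ((iota d A ^ m) n).2 = n.2 := by
  induction m with
  | zero => intro n; simp
  | succ m ih =>
    intro n
    rw [pow_succ, MulAut.mul_apply]
    exact (ih _).trans rfl

lemma snd_phi (x : Multiplicative (ZMod 2)) (n : GLd d A × Aˣ) :
    ((phi d A x) n).2 = n.2 :=
  snd_iota_pow d A _ n

/-- The character `(-1)^• : {1, ȷ} → Aˣ`. -/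
def negOnePow : Multiplicative (ZMod 2) →* Aˣ where
  toFun x := (-1 : Aˣ) ^ (Multiplicative.toAdd x).val
  map_one' := by
    show (-1 : Aˣ) ^ (Multiplicative.toAdd (1 : Multiplicative (ZMod 2))).val = 1
    simp
  map_mul' x y := by
    show (-1 : Aˣ) ^ _ = (-1 : Aˣ) ^ _ * (-1 : Aˣ) ^ _
    rw [toAdd_mul, ZMod.val_add, ← pow_eq_pow_mod _ (neg_one_sq), pow_add]

/-- The multiplier character `ν : 𝒢_d(A) → GL_1(A)`, with `ν(g, a) = a` and `ν(ȷ) = −1`. -/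
def nu : Gcal d A →* Aˣ :=
  SemidirectProduct.lift (MonoidHom.snd _ _) (negOnePow A) (by
    intro x
    refine MonoidHom.ext fun n => ?_
    show ((phi d A x) n).2 = (MulAut.conj (negOnePow A x)) n.2
    rw [snd_phi, MulAut.conj_apply, mul_comm ((negOnePow A) x) n.2, mul_inv_cancel_right])

end PaperCHT

/-!
Since `Γ = Δ ⊔ Δ γ₀`, a homomorphism `r : Γ → 𝒢_d(A)` with `r⁻¹(𝒢_d⁰(A)) = Δ` is determined by
its restriction `δ ↦ (ρ(δ), μ(δ))` to `Δ` and by `r(γ₀) = (P, -μ(γ₀))·ȷ`; conversely such data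
extend to a homomorphism exactly when `r(γ₀) r(δ) = r(γ₀δγ₀⁻¹) r(γ₀)` and `r(γ₀)² = r(γ₀²)`.
Multiplying out in the semidirect product, the `GL_d`-components of these two relations are the
two matrix identities, and their `Aˣ`-components hold automatically because `Aˣ` is commutative.
-/

namespace Subgroup

variable {Γ : Type*} [Group Γ] {Δ : Subgroup Γ} {γ₀ : Γ}

lemma mul_inv_mem_of_index_two (hΔ : Δ.index = 2) (hγ₀ : γ₀ ∉ Δ) {γ : Γ} (hγ : γ ∉ Δ) :
    γ * γ₀⁻¹ ∈ Δ :=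
  (mul_mem_iff_of_index_two hΔ).2 (iff_of_false hγ (inv_mem_iff.not.2 hγ₀))

lemma exists_eq_or_eq_mul_of_index_two (hΔ : Δ.index = 2) (hγ₀ : γ₀ ∉ Δ) (γ : Γ) :
    ∃ δ : Δ, γ = δ ∨ γ = δ * γ₀ := by
  by_cases hγ : γ ∈ Δ
  · exact ⟨⟨γ, hγ⟩, Or.inl rfl⟩
  · exact ⟨⟨γ * γ₀⁻¹, mul_inv_mem_of_index_two hΔ hγ₀ hγ⟩,
      Or.inr (inv_mul_cancel_right γ γ₀).symm⟩

lemma coe_mul_notMem (hγ₀ : γ₀ ∉ Δ) (δ : Δ) : (δ : Γ) * γ₀ ∉ Δ :=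
  fun h => hγ₀ ((Δ.mul_mem_cancel_left δ.2).1 h)

end Subgroup

namespace MonoidHom

open Subgroup

variable {Γ : Type*} [Group Γ] {Δ : Subgroup Γ} {γ₀ : Γ}

lemma ext_of_index_two {M : Type*} [Monoid M] (hΔ : Δ.index = 2) (hγ₀ : γ₀ ∉ Δ)
    {f g : Γ →* M} (hfg : ∀ δ : Δ, f δ = g δ) (hfg₀ : f γ₀ = g γ₀) : f = g := by
  ext γ
  obtain ⟨δ, rfl | rfl⟩ := exists_eq_or_eq_mul_of_index_two hΔ hγ₀ γ
  · exact hfg δ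
  · rw [map_mul, map_mul, hfg δ, hfg₀]

lemma apply_mem_iff_of_index_two {G : Type*} [Group G] {K : Subgroup G}
    (hΔ : Δ.index = 2) (hγ₀ : γ₀ ∉ Δ) {f : Γ →* G} (hfΔ : ∀ δ : Δ, f δ ∈ K)
    (hf₀ : f γ₀ ∉ K) (γ : Γ) : f γ ∈ K ↔ γ ∈ Δ := by
  obtain ⟨δ, rfl | rfl⟩ := exists_eq_or_eq_mul_of_index_two hΔ hγ₀ γ
  · exact iff_of_true (hfΔ δ) δ.2
  · rw [map_mul, K.mul_mem_cancel_left (hfΔ δ)]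
    exact iff_of_false hf₀ (coe_mul_notMem hγ₀ δ)

variable {G : Type*} [Group G] (hΔ : Δ.index = 2) (hγ₀ : γ₀ ∉ Δ) (q : Δ →* G) (J : G)

open Classical in
noncomputable def extendOfIndexTwoFun (γ : Γ) : G :=
  if h : γ ∈ Δ then q ⟨γ, h⟩ else q ⟨γ * γ₀⁻¹, mul_inv_mem_of_index_two hΔ hγ₀ h⟩ * J

lemma extendOfIndexTwoFun_coe (δ : Δ) : extendOfIndexTwoFun hΔ hγ₀ q J δ = q δ :=
  dif_pos δ.2

lemma extendOfIndexTwoFun_coe_mul_self (δ : Δ) :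
    extendOfIndexTwoFun hΔ hγ₀ q J (δ * γ₀) = q δ * J := by
  rw [extendOfIndexTwoFun, dif_neg (coe_mul_notMem hγ₀ δ)]
  congr
  exact mul_inv_cancel_right _ _

lemma extendOfIndexTwoFun_coe_mul (δ : Δ) (γ : Γ) :
    extendOfIndexTwoFun hΔ hγ₀ q J (δ * γ) = q δ * extendOfIndexTwoFun hΔ hγ₀ q J γ := by
  obtain ⟨δ', rfl | rfl⟩ := exists_eq_or_eq_mul_of_index_two hΔ hγ₀ γ
  · rw [← coe_mul, extendOfIndexTwoFun_coe, extendOfIndexTwoFun_coe, map_mul]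
  · rw [← mul_assoc, ← coe_mul, extendOfIndexTwoFun_coe_mul_self,
      extendOfIndexTwoFun_coe_mul_self, map_mul, mul_assoc]

variable {hΔ hγ₀ q J}

lemma extendOfIndexTwoFun_self_mul
    (hconj : ∀ δ δ' : Δ, (δ' : Γ) = γ₀ * δ * γ₀⁻¹ → J * q δ = q δ' * J)
    (hsq : ∀ δ : Δ, (δ : Γ) = γ₀ * γ₀ → J * J = q δ) (γ : Γ) :
    extendOfIndexTwoFun hΔ hγ₀ q J (γ₀ * γ) = J * extendOfIndexTwoFun hΔ hγ₀ q J γ := by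
  have hconj_mem (δ : Δ) : γ₀ * δ * γ₀⁻¹ ∈ Δ :=
    (normal_of_index_eq_two hΔ).conj_mem _ δ.2 γ₀
  obtain ⟨δ, rfl | rfl⟩ := exists_eq_or_eq_mul_of_index_two hΔ hγ₀ γ
  · rw [show γ₀ * δ = (⟨_, hconj_mem δ⟩ : Δ) * γ₀ by simp, extendOfIndexTwoFun_coe_mul_self,
      extendOfIndexTwoFun_coe, hconj δ ⟨_, hconj_mem δ⟩ rfl]
  · let s : Δ := ⟨γ₀ * γ₀, mul_self_mem_of_index_two hΔ γ₀⟩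
    rw [show γ₀ * (δ * γ₀) = ((⟨_, hconj_mem δ⟩ * s : Δ) : Γ) by simp [s, mul_assoc],
      extendOfIndexTwoFun_coe, extendOfIndexTwoFun_coe_mul_self, map_mul, ← hsq s rfl, ← mul_assoc,
      ← hconj δ ⟨_, hconj_mem δ⟩ rfl, mul_assoc]

variable (hΔ hγ₀ q J)
variable (hconj : ∀ δ δ' : Δ, (δ' : Γ) = γ₀ * δ * γ₀⁻¹ → J * q δ = q δ' * J)
  (hsq : ∀ δ : Δ, (δ : Γ) = γ₀ * γ₀ → J * J = q δ)

noncomputable def extendOfIndexTwo : Γ →* G where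
  toFun := extendOfIndexTwoFun hΔ hγ₀ q J
  map_one' := by simpa using extendOfIndexTwoFun_coe hΔ hγ₀ q J 1
  map_mul' γ γ' := by
    obtain ⟨δ, rfl | rfl⟩ := exists_eq_or_eq_mul_of_index_two hΔ hγ₀ γ
    · rw [extendOfIndexTwoFun_coe_mul, extendOfIndexTwoFun_coe]
    · rw [mul_assoc, extendOfIndexTwoFun_coe_mul, extendOfIndexTwoFun_self_mul hconj hsq,
        extendOfIndexTwoFun_coe_mul_self, mul_assoc]

lemma extendOfIndexTwo_coe (δ : Δ) : extendOfIndexTwo hΔ hγ₀ q J hconj hsq δ = q δ :=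
  extendOfIndexTwoFun_coe hΔ hγ₀ q J δ

lemma extendOfIndexTwo_apply_self : extendOfIndexTwo hΔ hγ₀ q J hconj hsq γ₀ = J := by
  have h := extendOfIndexTwoFun_coe_mul_self hΔ hγ₀ q J 1
  rwa [OneMemClass.coe_one, one_mul, map_one, one_mul] at h

end MonoidHom

namespace PaperCHT

open SemidirectProduct Multiplicative MonoidHom

variable {d : ℕ} {A : Type*} [CommRing A]

lemma ofAdd_one_ne_one : (ofAdd 1 : Multiplicative (ZMod 2)) ≠ 1 := by decide

lemma eq_ofAdd_one_of_ne_one {x : Multiplicative (ZMod 2)} (hx : x ≠ 1) : x = ofAdd 1 := by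
  revert x
  decide

lemma phi_ofAdd_one (n : GLd d A × Aˣ) :
    phi d A (ofAdd 1) n = (scalarU d A n.2 * tinv d A n.1, n.2) := by
  show (iota d A ^ (1 : ZMod 2).val) n = _
  rw [ZMod.val_one, pow_one]
  rfl

lemma mem_Gzero_iff (x : Gcal d A) : x ∈ Gzero d A ↔ x.right = 1 :=
  ⟨by rintro ⟨n, rfl⟩; rfl, fun h => ⟨x.left, SemidirectProduct.ext rfl h.symm⟩⟩

lemma negOnePow_ofAdd_one : negOnePow A (ofAdd 1) = -1 := by
  show (-1 : Aˣ) ^ (1 : ZMod 2).val = -1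
  rw [ZMod.val_one, pow_one]

lemma nu_apply (x : Gcal d A) : nu d A x = x.left.2 * negOnePow A x.right := by
  conv_lhs => rw [← inl_left_mul_inr_right x]
  rw [map_mul, nu, lift_inl, lift_inr]
  rfl

lemma scalarU_val_mul (a : Aˣ) (X : Matrix (Fin d) (Fin d) A) :
    (scalarU d A a).val * X = (a : A) • X := by
  rw [scalarU_val, scalar_apply, smul_eq_diagonal_mul]

lemma mk_ofAdd_one_mul_mk_one (P g : GLd d A) (a b : Aˣ) :
    (⟨(P, a), ofAdd 1⟩ * ⟨(g, b), 1⟩ : Gcal d A)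
      = ⟨(P * (scalarU d A b * tinv d A g), a * b), ofAdd 1⟩ := by
  ext1 <;> simp [phi_ofAdd_one]

lemma mk_one_mul_mk_ofAdd_one (g P : GLd d A) (b a : Aˣ) :
    (⟨(g, b), 1⟩ * ⟨(P, a), ofAdd 1⟩ : Gcal d A) = ⟨(g * P, b * a), ofAdd 1⟩ := by
  ext1 <;> simp

lemma mk_ofAdd_one_mul_self (P : GLd d A) (a : Aˣ) :
    (⟨(P, a), ofAdd 1⟩ * ⟨(P, a), ofAdd 1⟩ : Gcal d A)
      = ⟨(P * (scalarU d A a * tinv d A P), a * a), 1⟩ := by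
  ext1
  · simp [phi_ofAdd_one]
  · exact (by decide : (ofAdd 1 * ofAdd 1 : Multiplicative (ZMod 2)) = 1)

lemma mk_ofAdd_one_mul_mk_one_eq_iff (P g g' : GLd d A) (a b b' : Aˣ) :
    (⟨(P, a), ofAdd 1⟩ * ⟨(g, b), 1⟩ = (⟨(g', b'), 1⟩ * ⟨(P, a), ofAdd 1⟩ : Gcal d A)) ↔
      ((g.val)ᵀ * (P⁻¹).val * g'.val = (b : A) • (P⁻¹).val ∧ b = b') := by
  rw [mk_ofAdd_one_mul_mk_one, mk_one_mul_mk_ofAdd_one, SemidirectProduct.ext_iff]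
  simp only [Prod.mk.injEq, and_true]
  refine and_congr ?_ (by rw [mul_comm b', mul_right_inj])
  have hval : (g.val)ᵀ * (P⁻¹).val * g'.val = ((tinv d A g)⁻¹ * P⁻¹ * g').val := rfl
  rw [hval, ← scalarU_val_mul, ← Units.val_mul, Units.val_inj, ← _root_.mul_inv_rev,
    inv_mul_eq_iff_eq_mul, ← mul_assoc (P * _), eq_mul_inv_iff_mul_eq, mul_assoc P,
    (scalarU_commute d A b _).eq, eq_comm]

lemma mk_ofAdd_one_mul_self_eq_iff (P g : GLd d A) (a b : Aˣ) :
    (⟨(P, a), ofAdd 1⟩ * ⟨(P, a), ofAdd 1⟩ = (⟨(g, b), 1⟩ : Gcal d A)) ↔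
      ((P⁻¹).val * g.val = (a : A) • ((P⁻¹).val)ᵀ ∧ a * a = b) := by
  rw [mk_ofAdd_one_mul_self, SemidirectProduct.ext_iff]
  simp only [Prod.mk.injEq, and_true]
  rw [eq_comm (a := P * _), ← inv_mul_eq_iff_eq_mul, Units.ext_iff, Units.val_mul, Units.val_mul,
    scalarU_val_mul, tinv_val]

variable {Γ : Type*} [Group Γ] {Δ : Subgroup Γ} {γ₀ : Γ}

section Forward

variable {r : Γ →* Gcal d A} (hr : ∀ γ : Γ, r γ ∈ Gzero d A ↔ γ ∈ Δ)
include hr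

lemma right_apply_coe (δ : Δ) : (r δ).right = 1 :=
  (mem_Gzero_iff _).1 ((hr δ).2 δ.2)

variable (r) in
def glComponent : Δ →* GLd d A where
  toFun δ := (r δ).left.1
  map_one' := by rw [OneMemClass.coe_one, map_one]; rfl
  map_mul' δ δ' := by
    rw [Subgroup.coe_mul, map_mul, mul_left, right_apply_coe hr, map_one]
    rfl

lemma apply_coe_eq_mk (δ : Δ) : r δ = ⟨(glComponent r hr δ, nu d A (r δ)), 1⟩ := by
  refine SemidirectProduct.ext (Prod.ext rfl ?_) (right_apply_coe hr δ)
  rw [nu_apply, right_apply_coe hr, map_one, mul_one]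

lemma apply_eq_mk_of_notMem (hγ₀ : γ₀ ∉ Δ) :
    r γ₀ = ⟨((r γ₀).left.1, -nu d A (r γ₀)), ofAdd 1⟩ := by
  have hright : (r γ₀).right = ofAdd 1 :=
    eq_ofAdd_one_of_ne_one fun h => hγ₀ ((hr γ₀).1 ((mem_Gzero_iff _).2 h))
  refine SemidirectProduct.ext (Prod.ext rfl ?_) hright
  rw [nu_apply, hright, negOnePow_ofAdd_one, mul_neg_one, neg_neg]

variable (hγ₀ : γ₀ ∉ Δ)
include hγ₀

lemma glComponent_conj (δ δ' : Δ) (hδ' : (δ' : Γ) = γ₀ * δ * γ₀⁻¹) :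
    ((glComponent r hr δ).val)ᵀ * ((r γ₀).left.1⁻¹).val * (glComponent r hr δ').val
      = ((nu d A).comp r δ : A) • ((r γ₀).left.1⁻¹).val := by
  have h : r γ₀ * r δ = r δ' * r γ₀ := by rw [← map_mul, ← map_mul, hδ', inv_mul_cancel_right]
  rw [apply_coe_eq_mk hr δ, apply_coe_eq_mk hr δ', apply_eq_mk_of_notMem hr hγ₀] at h
  exact ((mk_ofAdd_one_mul_mk_one_eq_iff _ _ _ _ _ _).1 h).1

lemma glComponent_sq (δ : Δ) (hδ : (δ : Γ) = γ₀ * γ₀) :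
    ((r γ₀).left.1⁻¹).val * (glComponent r hr δ).val
      = (-((nu d A).comp r γ₀ : A)) • (((r γ₀).left.1⁻¹).val)ᵀ := by
  have h : r γ₀ * r γ₀ = r δ := by rw [← map_mul, hδ]
  rw [apply_coe_eq_mk hr δ, apply_eq_mk_of_notMem hr hγ₀] at h
  rw [← Units.val_neg]
  exact ((mk_ofAdd_one_mul_self_eq_iff _ _ _ _).1 h).1

end Forward

section Inverse

def toGzeroHom (ρ : Δ →* GLd d A) (μ : Γ →* Aˣ) : Δ →* Gcal d A :=
  inl.comp (ρ.prod (μ.comp Δ.subtype))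

variable {ρ : Δ →* GLd d A} {μ : Γ →* Aˣ} {P : GLd d A}
  (hΔ : Δ.index = 2) (hγ₀ : γ₀ ∉ Δ)
  (h1 : ∀ δ δ' : Δ, (δ' : Γ) = γ₀ * δ * γ₀⁻¹ →
    ((ρ δ).val)ᵀ * (P⁻¹).val * (ρ δ').val = (μ (δ : Γ) : A) • (P⁻¹).val)
  (h2 : ∀ δ : Δ, (δ : Γ) = γ₀ * γ₀ →
    (P⁻¹).val * (ρ δ).val = (-(μ γ₀ : A)) • ((P⁻¹).val)ᵀ)

noncomputable def homOfTriple : Γ →* Gcal d A :=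
  extendOfIndexTwo hΔ hγ₀ (toGzeroHom ρ μ) ⟨(P, -μ γ₀), ofAdd 1⟩
    (fun δ δ' hδ' => (mk_ofAdd_one_mul_mk_one_eq_iff _ _ _ _ _ _).2
      ⟨h1 δ δ' hδ', show μ δ = μ δ' by
        rw [hδ', map_mul, map_mul, map_inv, mul_comm (μ γ₀), mul_inv_cancel_right]⟩)
    (fun δ hδ => (mk_ofAdd_one_mul_self_eq_iff _ _ _ _).2
      ⟨by rw [Units.val_neg]; exact h2 δ hδ, show _ = μ δ by rw [hδ, map_mul, neg_mul_neg]⟩)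

lemma homOfTriple_coe (δ : Δ) : homOfTriple hΔ hγ₀ h1 h2 δ = ⟨(ρ δ, μ δ), 1⟩ :=
  extendOfIndexTwo_coe ..

lemma homOfTriple_apply_self : homOfTriple hΔ hγ₀ h1 h2 γ₀ = ⟨(P, -μ γ₀), ofAdd 1⟩ :=
  extendOfIndexTwo_apply_self ..

lemma homOfTriple_mem_Gzero_iff (γ : Γ) : homOfTriple hΔ hγ₀ h1 h2 γ ∈ Gzero d A ↔ γ ∈ Δ := by
  refine apply_mem_iff_of_index_two hΔ hγ₀ (fun δ => ?_) ?_ γ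
  · rw [homOfTriple_coe]
    exact ⟨_, rfl⟩
  · rw [homOfTriple_apply_self, mem_Gzero_iff]
    exact ofAdd_one_ne_one

lemma glComponent_homOfTriple :
    glComponent (homOfTriple hΔ hγ₀ h1 h2) (homOfTriple_mem_Gzero_iff hΔ hγ₀ h1 h2) = ρ := by
  ext1 δ
  show (homOfTriple hΔ hγ₀ h1 h2 δ).left.1 = ρ δ
  rw [homOfTriple_coe]

lemma nu_comp_homOfTriple : (nu d A).comp (homOfTriple hΔ hγ₀ h1 h2) = μ := by
  refine ext_of_index_two hΔ hγ₀ (fun δ => ?_) ?_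
  · rw [MonoidHom.comp_apply, homOfTriple_coe, nu_apply, map_one, mul_one]
  · rw [MonoidHom.comp_apply, homOfTriple_apply_self, nu_apply, negOnePow_ofAdd_one,
      mul_neg_one, neg_neg]

end Inverse

lemma homOfTriple_glComponent (hΔ : Δ.index = 2) (hγ₀ : γ₀ ∉ Δ) {r : Γ →* Gcal d A}
    (hr : ∀ γ : Γ, r γ ∈ Gzero d A ↔ γ ∈ Δ) :
    homOfTriple hΔ hγ₀ (glComponent_conj hr hγ₀) (glComponent_sq hr hγ₀) = r :=
  ext_of_index_two hΔ hγ₀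
    (fun δ => (homOfTriple_coe ..).trans (apply_coe_eq_mk hr δ).symm)
    ((homOfTriple_apply_self ..).trans (apply_eq_mk_of_notMem hr hγ₀).symm)

end PaperCHT

open PaperCHT in
theorem statement0_general {Γ : Type*} [Group Γ] (Δ : Subgroup Γ) (hΔ : Δ.index = 2)
    (γ₀ : Γ) (hγ₀ : γ₀ ∉ Δ) (d : ℕ) (A : Type*) [CommRing A] :
    ∃ e : {r : Γ →* Gcal d A // ∀ γ : Γ, r γ ∈ Gzero d A ↔ γ ∈ Δ} ≃
        {t : (Δ →* GLd d A) × (Γ →* Aˣ) × GLd d A //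
          (∀ δ δ' : Δ, (δ' : Γ) = γ₀ * δ * γ₀⁻¹ →
            ((t.1 δ).val)ᵀ * (t.2.2⁻¹).val * (t.1 δ').val
              = (t.2.1 (δ : Γ) : A) • (t.2.2⁻¹).val) ∧
          (∀ δ : Δ, (δ : Γ) = γ₀ * γ₀ →
            (t.2.2⁻¹).val * (t.1 δ).val
              = (-(t.2.1 γ₀ : A)) • ((t.2.2⁻¹).val)ᵀ)},
      ∀ r : {r : Γ →* Gcal d A // ∀ γ : Γ, r γ ∈ Gzero d A ↔ γ ∈ Δ},
        (∀ δ : Δ, (r.val (δ : Γ)).left.1 = (e r).val.1 δ) ∧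
        (∀ γ : Γ, nu d A (r.val γ) = (e r).val.2.1 γ) ∧
        r.val γ₀ = ⟨((e r).val.2.2, -((e r).val.2.1 γ₀)), Multiplicative.ofAdd 1⟩ := by
  refine ⟨
    { toFun := fun r => ⟨(glComponent r.1 r.2, (nu d A).comp r.1, (r.1 γ₀).left.1),
        glComponent_conj r.2 hγ₀, glComponent_sq r.2 hγ₀⟩
      invFun := fun t => ⟨homOfTriple hΔ hγ₀ t.2.1 t.2.2, homOfTriple_mem_Gzero_iff hΔ hγ₀ _ _⟩
      left_inv := fun r => Subtype.ext (homOfTriple_glComponent hΔ hγ₀ r.2)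
      right_inv := fun ⟨_, h1, h2⟩ => Subtype.ext <| Prod.ext
        (glComponent_homOfTriple hΔ hγ₀ h1 h2) <| Prod.ext
        (nu_comp_homOfTriple hΔ hγ₀ h1 h2)
        (congrArg (fun x => x.left.1) (homOfTriple_apply_self hΔ hγ₀ h1 h2)) },
    fun r => ⟨fun _ => rfl, fun _ => rfl, apply_eq_mk_of_notMem r.2 hγ₀⟩⟩

open PaperCHT in
/-- **Clozel–Harris–Taylor parametrization of `𝒢_d`-valued homomorphisms.**
For a group `Γ` with an index-2 subgroup `Δ` and `γ₀ ∈ Γ ∖ Δ`, homomorphisms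
`r : Γ → 𝒢_d(A)` with `r⁻¹(𝒢_d⁰(A)) = Δ` correspond bijectively to triples `(ρ, μ, P)`
with `ρ : Δ → GL_d(A)`, `μ : Γ → Aˣ` and `P ∈ GL_d(A)` satisfying
`ρ(δ)ᵀ·P⁻¹·ρ(γ₀δγ₀⁻¹) = μ(δ)·P⁻¹` and `P⁻¹·ρ(γ₀²) = −μ(γ₀)·(Pᵀ)⁻¹`; under the bijection
`ρ` is the `GL_d`-component of `r|_Δ`, `μ = ν ∘ r`, and `r(γ₀) = (P, −μ(γ₀))·ȷ`. -/
theorem statement0 {Γ : Type*} [Group Γ] (Δ : Subgroup Γ) (hΔ : Δ.index = 2)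
    (γ₀ : Γ) (hγ₀ : γ₀ ∉ Δ) (d : ℕ) (hd : 1 ≤ d) (A : Type*) [CommRing A] :
    ∃ e : {r : Γ →* Gcal d A // ∀ γ : Γ, r γ ∈ Gzero d A ↔ γ ∈ Δ} ≃
        {t : (Δ →* GLd d A) × (Γ →* Aˣ) × GLd d A //
          (∀ δ δ' : Δ, (δ' : Γ) = γ₀ * δ * γ₀⁻¹ →
            ((t.1 δ).val)ᵀ * (t.2.2⁻¹).val * (t.1 δ').val
              = (t.2.1 (δ : Γ) : A) • (t.2.2⁻¹).val) ∧
          (∀ δ : Δ, (δ : Γ) = γ₀ * γ₀ →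
            (t.2.2⁻¹).val * (t.1 δ).val
              = (-(t.2.1 γ₀ : A)) • ((t.2.2⁻¹).val)ᵀ)},
      ∀ r : {r : Γ →* Gcal d A // ∀ γ : Γ, r γ ∈ Gzero d A ↔ γ ∈ Δ},
        (∀ δ : Δ, (r.val (δ : Γ)).left.1 = (e r).val.1 δ) ∧
        (∀ γ : Γ, nu d A (r.val γ) = (e r).val.2.1 γ) ∧
        r.val γ₀ = ⟨((e r).val.2.2, -((e r).val.2.1 γ₀)), Multiplicative.ofAdd 1⟩ :=
  statement0_general Δ hΔ γ₀ hγ₀ d A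
end

section
/- Let k be a field, let Γ be a group with a subgroup Δ of index 2, and let c ∈ Γ ∖ Δ with c² = 1. Let ρ : Δ → GL_d(k) and μ : Γ → kˣ be group homomorphisms with μ(c) = −1, and let P ∈ GL_d(k) satisfy Pᵀ = P and ρ(δ)ᵀ · P⁻¹ · ρ(cδc) = μ(δ) · P⁻¹ for all δ ∈ Δ. Then there exists a unique group homomorphism Ad : Γ → GL_k(M_d(k)) (k-linear automorphisms of the space of d×d matrices) such that Ad(δ)(X) = ρ(δ)·X·ρ(δ)⁻¹ for all δ ∈ Δ and Ad(c)(X) = −P·Xᵀ·P⁻¹. Moreover, Ad is unchanged if P is replaced by λ·P for any λ ∈ kˣ. -/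
/-!
Since `Δ` has index 2 and `c ∉ Δ` is an involution, `Γ = Δ ⊔ Δc`, so a homomorphism on `Γ` is the
same as a homomorphism `f` on `Δ` together with an involution `s` satisfying `s f(δ) = f(cδc) s`.
For `f = ρ(·) X ρ(·)⁻¹` and `s X = −P Xᵀ P⁻¹` this compatibility is the pairing relation: it gives
`P ρ(δ)⁻ᵀ = μ(δ)⁻¹ ρ(cδc) P` and `ρ(δ)ᵀ P⁻¹ = μ(δ) P⁻¹ ρ(cδc)⁻¹`, and the two scalars cancel.
`s` is an involution because `P` is symmetric, and it is unchanged under `P ↦ λP` because `λ`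
cancels against the `λ⁻¹` of `P⁻¹`.
-/

open Matrix

namespace Subgroup

variable {Γ G : Type*} [Group Γ] [Group G] {Δ : Subgroup Γ} {c : Γ}

theorem mul_mem_of_notMem_of_index_eq_two (hΔ : Δ.index = 2) (hc : c ∉ Δ) {γ : Γ}
    (hγ : γ ∉ Δ) : γ * c ∈ Δ :=
  (mul_mem_iff_of_index_two hΔ).mpr (iff_of_false hγ hc)

theorem monoidHom_ext_of_index_eq_two (hΔ : Δ.index = 2) (hc : c ∉ Δ) {F F' : Γ →* G}
    (hΔF : ∀ δ ∈ Δ, F δ = F' δ) (hcF : F c = F' c) : F = F' := by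
  ext γ
  by_cases hγ : γ ∈ Δ
  · exact hΔF γ hγ
  · rw [← mul_inv_cancel_right γ c, map_mul F, map_mul F', map_inv, map_inv,
      hΔF _ (mul_mem_of_notMem_of_index_eq_two hΔ hc hγ), hcF]

section Extend

variable (hΔ : Δ.index = 2) (hc : c ∉ Δ) (f : Δ →* G) (s : G)

open scoped Classical in
noncomputable def extendOfIndexEqTwoFun (γ : Γ) : G :=
  if h : γ ∈ Δ then f ⟨γ, h⟩ else f ⟨γ * c, mul_mem_of_notMem_of_index_eq_two hΔ hc h⟩ * s

theorem extendOfIndexEqTwoFun_coe (δ : Δ) : extendOfIndexEqTwoFun hΔ hc f s δ = f δ := by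
  rw [extendOfIndexEqTwoFun, dif_pos δ.2]

theorem extendOfIndexEqTwoFun_one : extendOfIndexEqTwoFun hΔ hc f s 1 = 1 := by
  simpa using extendOfIndexEqTwoFun_coe hΔ hc f s 1

theorem extendOfIndexEqTwoFun_mul_involution (hc2 : c * c = 1) (hs2 : s * s = 1) (γ : Γ) :
    extendOfIndexEqTwoFun hΔ hc f s (γ * c) = extendOfIndexEqTwoFun hΔ hc f s γ * s := by
  by_cases hγ : γ ∈ Δ
  · have hγc : γ * c ∉ Δ := fun h => hc ((Δ.mul_mem_cancel_left hγ).mp h)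
    rw [extendOfIndexEqTwoFun, dif_neg hγc, extendOfIndexEqTwoFun, dif_pos hγ]
    congr 2
    ext
    simp [mul_assoc, hc2]
  · rw [extendOfIndexEqTwoFun, dif_pos (mul_mem_of_notMem_of_index_eq_two hΔ hc hγ),
      extendOfIndexEqTwoFun, dif_neg hγ, mul_assoc, hs2, mul_one]

theorem extendOfIndexEqTwoFun_mul_coe (hc2 : c * c = 1)
    (hs : ∀ δ δ' : Δ, (δ' : Γ) = c * δ * c → s * f δ = f δ' * s) (γ : Γ) (δ : Δ) :
    extendOfIndexEqTwoFun hΔ hc f s (γ * δ) = extendOfIndexEqTwoFun hΔ hc f s γ * f δ := by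
  by_cases hγ : γ ∈ Δ
  · rw [extendOfIndexEqTwoFun, dif_pos (Δ.mul_mem hγ δ.2), extendOfIndexEqTwoFun, dif_pos hγ,
      ← map_mul]
    rfl
  · have hγδ : γ * δ ∉ Δ := fun h => hγ ((Δ.mul_mem_cancel_right δ.2).mp h)
    set γc : Δ := ⟨γ * c, mul_mem_of_notMem_of_index_eq_two hΔ hc hγ⟩
    set γδc : Δ := ⟨γ * δ * c, mul_mem_of_notMem_of_index_eq_two hΔ hc hγδ⟩
    -- `γc⁻¹ * γδc = c * δ * c`, which is thereby seen to lie in `Δ`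
    have hconj : ((γc⁻¹ * γδc : Δ) : Γ) = c * δ * c := by
      simp [γc, γδc, mul_assoc, inv_eq_of_mul_eq_one_right hc2]
    rw [extendOfIndexEqTwoFun, dif_neg hγδ, extendOfIndexEqTwoFun, dif_neg hγ]
    change f γδc * s = f γc * s * f δ
    rw [mul_assoc, hs δ _ hconj, ← mul_assoc, ← map_mul, mul_inv_cancel_left]

noncomputable def extendOfIndexEqTwo (hc2 : c * c = 1) (hs2 : s * s = 1)
    (hs : ∀ δ δ' : Δ, (δ' : Γ) = c * δ * c → s * f δ = f δ' * s) : Γ →* G where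
  toFun := extendOfIndexEqTwoFun hΔ hc f s
  map_one' := extendOfIndexEqTwoFun_one hΔ hc f s
  map_mul' a b := by
    by_cases hb : b ∈ Δ
    · exact (extendOfIndexEqTwoFun_mul_coe hΔ hc f s hc2 hs a ⟨b, hb⟩).trans
        (congrArg _ (extendOfIndexEqTwoFun_coe hΔ hc f s ⟨b, hb⟩).symm)
    · set bc : Δ := ⟨b * c, mul_mem_of_notMem_of_index_eq_two hΔ hc hb⟩
      have hb' : b = bc * c := by simp [bc, mul_assoc, hc2]
      rw [hb', ← mul_assoc, extendOfIndexEqTwoFun_mul_involution hΔ hc f s hc2 hs2,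
        extendOfIndexEqTwoFun_mul_involution hΔ hc f s hc2 hs2,
        extendOfIndexEqTwoFun_mul_coe hΔ hc f s hc2 hs, extendOfIndexEqTwoFun_coe, mul_assoc]

variable {hΔ hc f s}

@[simp]
theorem extendOfIndexEqTwo_apply_coe (hc2 : c * c = 1) (hs2 : s * s = 1)
    (hs : ∀ δ δ' : Δ, (δ' : Γ) = c * δ * c → s * f δ = f δ' * s) (δ : Δ) :
    extendOfIndexEqTwo hΔ hc f s hc2 hs2 hs δ = f δ :=
  extendOfIndexEqTwoFun_coe hΔ hc f s δ

@[simp]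
theorem extendOfIndexEqTwo_apply_involution (hc2 : c * c = 1) (hs2 : s * s = 1)
    (hs : ∀ δ δ' : Δ, (δ' : Γ) = c * δ * c → s * f δ = f δ' * s) :
    extendOfIndexEqTwo hΔ hc f s hc2 hs2 hs c = s := by
  change extendOfIndexEqTwoFun hΔ hc f s c = s
  simpa [extendOfIndexEqTwoFun_one] using
    extendOfIndexEqTwoFun_mul_involution hΔ hc f s hc2 hs2 1

end Extend

end Subgroup

section Conj

variable (R : Type*) {A : Type*} [CommSemiring R] [Semiring A] [Algebra R A]

noncomputable def Units.conjEnd : Aˣ →* (Module.End R A)ˣ :=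
  ((DistribMulAction.toModuleEnd R A).comp ConjAct.toConjAct.toMonoidHom).toHomUnits

@[simp]
theorem Units.conjEnd_apply (u : Aˣ) (x : A) : (Units.conjEnd R u).val x = u * x * ↑u⁻¹ :=
  rfl

end Conj

namespace Matrix

variable {n R : Type*} [Fintype n] [DecidableEq n] [CommRing R]

noncomputable def transposeConj (P : (Matrix n n R)ˣ) : Module.End R (Matrix n n R) :=
  -((Units.conjEnd R P).val ∘ₗ (transposeLinearEquiv n n R R).toLinearMap)

@[simp]
theorem transposeConj_apply (P : (Matrix n n R)ˣ) (X : Matrix n n R) :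
    transposeConj P X = -(P.val * Xᵀ * (P⁻¹).val) :=
  rfl

theorem transpose_units_inv_of_transpose_eq {P : (Matrix n n R)ˣ} (hP : P.valᵀ = P.val) :
    (P⁻¹).valᵀ = (P⁻¹).val := by
  simp [transpose_nonsing_inv, hP]

theorem transposeConj_mul_self {P : (Matrix n n R)ˣ} (hP : P.valᵀ = P.val) :
    transposeConj P * transposeConj P = 1 := by
  ext1 X
  simp [transpose_mul, hP, transpose_units_inv_of_transpose_eq hP, mul_assoc, -coe_units_inv]

theorem transposeConj_smul_eq {P Q : (Matrix n n R)ˣ} (lam : Rˣ)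
    (hQ : Q.val = (lam : R) • P.val) :
    transposeConj Q = transposeConj P := by
  obtain rfl : Q = lam • P := Units.ext hQ
  ext1 X
  simp [Units.smul_def, smul_smul, -coe_units_inv]

theorem transposeConj_mul_conjEnd {P A B : (Matrix n n R)ˣ} (m : Rˣ)
    (h : A.valᵀ * (P⁻¹).val * B.val = (m : R) • (P⁻¹).val) :
    transposeConj P * (Units.conjEnd R A).val = (Units.conjEnd R B).val * transposeConj P := by
  have hA : (A⁻¹).valᵀ * A.valᵀ = 1 := by rw [← transpose_mul, Units.mul_inv, transpose_one]
  have hAP : A.valᵀ * (P⁻¹).val = (m : R) • ((P⁻¹).val * (B⁻¹).val) := by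
    rw [← smul_mul_assoc, ← h, Units.mul_inv_cancel_right]
  have hBP : (m : R) • (P.val * (A⁻¹).valᵀ) = B.val * P.val := by
    calc (m : R) • (P.val * (A⁻¹).valᵀ)
        = P.val * ((A⁻¹).valᵀ * (A.valᵀ * (P⁻¹).val * B.val)) * P.val := by
          rw [h, mul_smul_comm, mul_smul_comm, smul_mul_assoc, mul_assoc, mul_assoc,
            Units.inv_mul, mul_one]
      _ = B.val * P.val := by
          rw [← mul_assoc _ _ B.val, ← mul_assoc _ _ (P⁻¹).val, hA, one_mul,
            Units.mul_inv_cancel_left]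
  ext1 X
  simp only [Module.End.mul_apply, transposeConj_apply, Units.conjEnd_apply, transpose_mul]
  calc -(P.val * ((A⁻¹).valᵀ * (Xᵀ * A.valᵀ)) * (P⁻¹).val)
      = -((m : R) • (P.val * (A⁻¹).valᵀ) * Xᵀ * ((P⁻¹).val * (B⁻¹).val)) := by
        rw [smul_mul_assoc, smul_mul_assoc, ← mul_smul_comm, ← hAP]
        simp only [mul_assoc]
    _ = B.val * -(P.val * Xᵀ * (P⁻¹).val) * (B⁻¹).val := by
        rw [hBP]
        simp only [mul_neg, neg_mul, mul_assoc]

end Matrix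

theorem statement2_general {k : Type*} [Field k] {Γ : Type*} [Group Γ] (Δ : Subgroup Γ)
    (hΔ : Δ.index = 2) (c : Γ) (hc : c ∉ Δ) (hc2 : c * c = 1) {d : ℕ}
    (ρ : Δ →* (Matrix (Fin d) (Fin d) k)ˣ) (μ : Γ →* kˣ)
    (P : (Matrix (Fin d) (Fin d) k)ˣ) (hPsym : (P.val)ᵀ = P.val)
    (hpair : ∀ δ δ' : Δ, (δ' : Γ) = c * δ * c →
      ((ρ δ).val)ᵀ * (P⁻¹).val * (ρ δ').val = (μ (δ : Γ) : k) • (P⁻¹).val) :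
    (∃! Ad : Γ →* (Module.End k (Matrix (Fin d) (Fin d) k))ˣ,
      (∀ (δ : Δ) (X : Matrix (Fin d) (Fin d) k),
        (Ad (δ : Γ)).val X = (ρ δ).val * X * ((ρ δ)⁻¹).val) ∧
      (∀ X : Matrix (Fin d) (Fin d) k,
        (Ad c).val X = -(P.val * Xᵀ * (P⁻¹).val))) ∧
    (∀ (lam : kˣ) (Q : (Matrix (Fin d) (Fin d) k)ˣ), Q.val = (lam : k) • P.val →
      ∀ Ad' : Γ →* (Module.End k (Matrix (Fin d) (Fin d) k))ˣ,
        ((∀ (δ : Δ) (X : Matrix (Fin d) (Fin d) k),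
            (Ad' (δ : Γ)).val X = (ρ δ).val * X * ((ρ δ)⁻¹).val) ∧
          (∀ X : Matrix (Fin d) (Fin d) k,
            (Ad' c).val X = -(Q.val * Xᵀ * (Q⁻¹).val))) →
        ((∀ (δ : Δ) (X : Matrix (Fin d) (Fin d) k),
            (Ad' (δ : Γ)).val X = (ρ δ).val * X * ((ρ δ)⁻¹).val) ∧
          (∀ X : Matrix (Fin d) (Fin d) k,
            (Ad' c).val X = -(P.val * Xᵀ * (P⁻¹).val)))) := by
  let s : (Module.End k (Matrix (Fin d) (Fin d) k))ˣ :=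
    ⟨transposeConj P, transposeConj P, transposeConj_mul_self hPsym, transposeConj_mul_self hPsym⟩
  have hs : ∀ δ δ' : Δ, (δ' : Γ) = c * δ * c →
      s * (Units.conjEnd k).comp ρ δ = (Units.conjEnd k).comp ρ δ' * s :=
    fun δ δ' h => Units.ext (transposeConj_mul_conjEnd _ (hpair δ δ' h))
  let Ad := Subgroup.extendOfIndexEqTwo hΔ hc ((Units.conjEnd k).comp ρ) s hc2
    (Units.ext (transposeConj_mul_self hPsym)) hs
  have hAdΔ : ∀ δ : Δ, Ad δ = Units.conjEnd k (ρ δ) := by simp [Ad]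
  have hAdc : Ad c = s := by simp [Ad]
  refine ⟨⟨Ad, ⟨fun δ X => by rw [hAdΔ]; rfl, fun X => by rw [hAdc]; rfl⟩, ?_⟩, ?_⟩
  · rintro Ad' ⟨hΔ', hc'⟩
    refine Subgroup.monoidHom_ext_of_index_eq_two hΔ hc (fun δ hδ => ?_) ?_
    · rw [hAdΔ ⟨δ, hδ⟩]
      exact Units.ext (LinearMap.ext (hΔ' ⟨δ, hδ⟩))
    · rw [hAdc]
      exact Units.ext (LinearMap.ext hc')
  · rintro lam Q hQ Ad' ⟨hΔ', hc'⟩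
    refine ⟨hΔ', fun X => ?_⟩
    rw [hc', ← transposeConj_apply, ← transposeConj_apply, transposeConj_smul_eq lam hQ]

/-- **Extension of the adjoint action to `Gal(F(S)/F⁺)`.**
Let `Δ ≤ Γ` have index 2, `c ∈ Γ ∖ Δ` with `c² = 1`, let `ρ : Δ → GL_d(k)`, `μ : Γ → kˣ`
with `μ(c) = −1`, and let `P` be a symmetric invertible matrix with
`ρ(δ)ᵀ·P⁻¹·ρ(cδc) = μ(δ)·P⁻¹` for all `δ ∈ Δ`.  Then there is a unique homomorphism
`Ad : Γ → GL_k(M_d(k))` acting by `X ↦ ρ(δ)Xρ(δ)⁻¹` on `Δ` and by `X ↦ −P·Xᵀ·P⁻¹` at `c`;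
moreover `Ad` is unchanged when `P` is replaced by `λ·P` for `λ ∈ kˣ`. -/
theorem statement2 {k : Type*} [Field k] {Γ : Type*} [Group Γ] (Δ : Subgroup Γ)
    (hΔ : Δ.index = 2) (c : Γ) (hc : c ∉ Δ) (hc2 : c * c = 1) {d : ℕ}
    (ρ : Δ →* (Matrix (Fin d) (Fin d) k)ˣ) (μ : Γ →* kˣ) (hμc : μ c = -1)
    (P : (Matrix (Fin d) (Fin d) k)ˣ) (hPsym : (P.val)ᵀ = P.val)
    (hpair : ∀ δ δ' : Δ, (δ' : Γ) = c * δ * c →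
      ((ρ δ).val)ᵀ * (P⁻¹).val * (ρ δ').val = (μ (δ : Γ) : k) • (P⁻¹).val) :
    (∃! Ad : Γ →* (Module.End k (Matrix (Fin d) (Fin d) k))ˣ,
      (∀ (δ : Δ) (X : Matrix (Fin d) (Fin d) k),
        (Ad (δ : Γ)).val X = (ρ δ).val * X * ((ρ δ)⁻¹).val) ∧
      (∀ X : Matrix (Fin d) (Fin d) k,
        (Ad c).val X = -(P.val * Xᵀ * (P⁻¹).val))) ∧
    (∀ (lam : kˣ) (Q : (Matrix (Fin d) (Fin d) k)ˣ), Q.val = (lam : k) • P.val →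
      ∀ Ad' : Γ →* (Module.End k (Matrix (Fin d) (Fin d) k))ˣ,
        ((∀ (δ : Δ) (X : Matrix (Fin d) (Fin d) k),
            (Ad' (δ : Γ)).val X = (ρ δ).val * X * ((ρ δ)⁻¹).val) ∧
          (∀ X : Matrix (Fin d) (Fin d) k,
            (Ad' c).val X = -(Q.val * Xᵀ * (Q⁻¹).val))) →
        ((∀ (δ : Δ) (X : Matrix (Fin d) (Fin d) k),
            (Ad' (δ : Γ)).val X = (ρ δ).val * X * ((ρ δ)⁻¹).val) ∧
          (∀ X : Matrix (Fin d) (Fin d) k,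
            (Ad' c).val X = -(P.val * Xᵀ * (P⁻¹).val)))) :=
  statement2_general Δ hΔ c hc hc2 ρ μ P hPsym hpair
end
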